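/- arXiv:math/9201293 — 2 statements merged into one kernel-verified Lean document; each statement's English description precedes it below -/
import Mathlib

section
/- The map p(z) = z - |z|^{2α-2}z² is surjective from ℂ onto ℂ. -/
noncomputable def p (α : ℝ) (z : ℂ) : ℂ :=
  z - ((‖z‖ ^ (2 * α - 2) : ℝ) : ℂ) * z ^ 2

noncomputable section PSurjAux

namespace PSurj

open Real

/-- sign used for the imaginary part of the square root branch -/
def sg (w : ℂ) : ℝ := if 0 < w.im then -1 else 1

lemma sg_mul_self (w : ℂ) : sg w * sg w = 1 := by
  unfold sg; split_ifs <;> norm_num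

/-- the discriminant 1 - 4 c w -/
def X (w : ℂ) (c : ℝ) : ℂ := 1 - 4 * (c : ℂ) * w

def A (w : ℂ) (c : ℝ) : ℝ := Real.sqrt ((‖X w c‖ + (X w c).re) / 2)
def B (w : ℂ) (c : ℝ) : ℝ := Real.sqrt ((‖X w c‖ - (X w c).re) / 2)

lemma A_arg_nonneg (w : ℂ) (c : ℝ) : 0 ≤ (‖X w c‖ + (X w c).re) / 2 := by
  have := (abs_le.1 (Complex.abs_re_le_norm (X w c))).1
  linarith

lemma B_arg_nonneg (w : ℂ) (c : ℝ) : 0 ≤ (‖X w c‖ - (X w c).re) / 2 := by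
  have := Complex.re_le_norm (X w c)
  linarith

/-- continuous square root of the discriminant -/
def S (w : ℂ) (c : ℝ) : ℂ := (A w c : ℂ) + (sg w * B w c : ℝ) * Complex.I

lemma S_re (w : ℂ) (c : ℝ) : (S w c).re = A w c := by simp [S]
lemma S_im (w : ℂ) (c : ℝ) : (S w c).im = sg w * B w c := by simp [S]

lemma A_mul_self (w : ℂ) (c : ℝ) :
    A w c * A w c = (‖X w c‖ + (X w c).re) / 2 :=
  Real.mul_self_sqrt (A_arg_nonneg w c)

lemma B_mul_self (w : ℂ) (c : ℝ) :
    B w c * B w c = (‖X w c‖ - (X w c).re) / 2 :=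
  Real.mul_self_sqrt (B_arg_nonneg w c)

lemma A_mul_B (w : ℂ) (c : ℝ) : A w c * B w c = |(X w c).im| / 2 := by
  rw [A, B, ← Real.sqrt_mul (A_arg_nonneg w c)]
  have h2 : ‖X w c‖ ^ 2 = (X w c).re ^ 2 + (X w c).im ^ 2 := by
    rw [Complex.sq_norm, Complex.normSq_apply]; ring
  have h1 : (‖X w c‖ + (X w c).re) / 2 * ((‖X w c‖ - (X w c).re) / 2)
      = ((X w c).im / 2) ^ 2 := by nlinarith [h2]
  rw [h1, Real.sqrt_sq_eq_abs, abs_div]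
  norm_num

lemma X_im (w : ℂ) (c : ℝ) : (X w c).im = -(4 * c * w.im) := by
  simp [X]

lemma sg_abs_im (w : ℂ) (c : ℝ) (hc : 0 ≤ c) : sg w * |(X w c).im| = (X w c).im := by
  unfold sg
  split_ifs with h
  · rw [abs_of_nonpos (by rw [X_im]; nlinarith)]; ring
  · push_neg at h
    rw [abs_of_nonneg (by rw [X_im]; nlinarith)]; ring

lemma S_sq (w : ℂ) (c : ℝ) (hc : 0 ≤ c) : S w c * S w c = X w c := by
  have hA := A_mul_self w c
  have hB := B_mul_self w c
  have hAB := A_mul_B w c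
  have hsg := sg_mul_self w
  have him := sg_abs_im w c hc
  apply Complex.ext
  · rw [Complex.mul_re, S_re, S_im]
    nlinarith [hA, hB, hsg]
  · rw [Complex.mul_im, S_re, S_im]
    linear_combination (2 * sg w) * hAB + him

lemma A_nonneg (w : ℂ) (c : ℝ) : 0 ≤ A w c := Real.sqrt_nonneg _

lemma one_add_S_re (w : ℂ) (c : ℝ) : (1 + S w c).re = 1 + A w c := by
  simp [S]

lemma one_le_abs_one_add_S (w : ℂ) (c : ℝ) : 1 ≤ ‖1 + S w c‖ := by
  have h1 : (1 : ℝ) ≤ (1 + S w c).re := by rw [one_add_S_re]; linarith [A_nonneg w c]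
  exact h1.trans (Complex.re_le_norm _)

lemma one_add_S_ne (w : ℂ) (c : ℝ) : 1 + S w c ≠ 0 := by
  intro h
  have := one_le_abs_one_add_S w c
  rw [h] at this
  simp at this
  linarith

/-- the solution candidate -/
def Z (w : ℂ) (c : ℝ) : ℂ := 2 * w / (1 + S w c)

lemma Z_solves (w : ℂ) (c : ℝ) (hc : 0 ≤ c) : Z w c - (c : ℂ) * (Z w c) ^ 2 = w := by
  have hs := S_sq w c hc
  rw [X] at hs
  have hne := one_add_S_ne w c
  rw [Z]
  field_simp
  ring_nf
  linear_combination (-w) * hs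

lemma abs_Z_le (w : ℂ) (c : ℝ) : ‖Z w c‖ ≤ 2 * ‖w‖ := by
  rw [Z, norm_div, norm_mul]
  have h1 := one_le_abs_one_add_S w c
  have h2 : (0:ℝ) ≤ 2 * ‖w‖ := by positivity
  calc ‖(2:ℂ)‖ * ‖w‖ / ‖1 + S w c‖
      ≤ ‖(2:ℂ)‖ * ‖w‖ / 1 := by
        apply div_le_div_of_nonneg_left _ one_pos h1
        simpa using h2
    _ = 2 * ‖w‖ := by simp [Complex.norm_two]

lemma abs_S (w : ℂ) (c : ℝ) : ‖S w c‖ = Real.sqrt (‖X w c‖) := by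
  rw [Complex.norm_def, Complex.normSq_apply, S_re, S_im]
  congr 1
  have hA := A_mul_self w c
  have hB := B_mul_self w c
  have hsg := sg_mul_self w
  nlinarith [hA, hB, hsg]

lemma sqrt_one_add_le (t : ℝ) (ht : 0 ≤ t) : Real.sqrt (1 + t) ≤ 1 + Real.sqrt t := by
  have h : (1:ℝ) + t ≤ (1 + Real.sqrt t) ^ 2 := by
    nlinarith [Real.sq_sqrt ht, Real.sqrt_nonneg t]
  calc Real.sqrt (1 + t) ≤ Real.sqrt ((1 + Real.sqrt t) ^ 2) := Real.sqrt_le_sqrt h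
    _ = 1 + Real.sqrt t := Real.sqrt_sq (by positivity)

lemma abs_X_le (w : ℂ) (c : ℝ) (hc : 0 ≤ c) :
    ‖X w c‖ ≤ 1 + 4 * (c * ‖w‖) := by
  rw [X, sub_eq_add_neg]
  calc ‖1 + -(4 * (c:ℂ) * w)‖ ≤ ‖(1:ℂ)‖ + ‖-(4 * (c:ℂ) * w)‖ :=
        norm_add_le _ _
    _ = 1 + 4 * (c * ‖w‖) := by
        rw [norm_neg, norm_mul, norm_mul]
        simp [Complex.norm_real, abs_of_nonneg hc]
        ring

lemma abs_one_add_S_le (w : ℂ) (c : ℝ) (hc : 0 ≤ c) :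
    ‖1 + S w c‖ ≤ 2 * (1 + Real.sqrt (c * ‖w‖)) := by
  have h1 : ‖1 + S w c‖ ≤ 1 + ‖S w c‖ := by
    calc ‖1 + S w c‖ ≤ ‖(1:ℂ)‖ + ‖S w c‖ := norm_add_le _ _
      _ = 1 + ‖S w c‖ := by simp
  have h2 : ‖S w c‖ ≤ 1 + 2 * Real.sqrt (c * ‖w‖) := by
    rw [abs_S]
    calc Real.sqrt (‖X w c‖) ≤ Real.sqrt (1 + 4 * (c * ‖w‖)) :=
          Real.sqrt_le_sqrt (abs_X_le w c hc)
      _ ≤ 1 + Real.sqrt (4 * (c * ‖w‖)) := by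
          apply sqrt_one_add_le
          positivity
      _ = 1 + 2 * Real.sqrt (c * ‖w‖) := by
          rw [show (4:ℝ) * (c * ‖w‖) = 2 ^ 2 * (c * ‖w‖) by ring,
            Real.sqrt_mul (by positivity), Real.sqrt_sq (by norm_num)]
  linarith

lemma abs_Z_ge (w : ℂ) (c : ℝ) (hc : 0 ≤ c) :
    ‖w‖ / (1 + Real.sqrt (c * ‖w‖)) ≤ ‖Z w c‖ := by
  have hden : (0:ℝ) < ‖1 + S w c‖ := lt_of_lt_of_le one_pos (one_le_abs_one_add_S w c)
  have hle := abs_one_add_S_le w c hc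
  rw [Z, norm_div, norm_mul]
  have h2 : ‖(2:ℂ)‖ * ‖w‖ = 2 * ‖w‖ := by simp [Complex.norm_two]
  rw [h2]
  have key : 2 * ‖w‖ / (2 * (1 + Real.sqrt (c * ‖w‖)))
      ≤ 2 * ‖w‖ / ‖1 + S w c‖ :=
    div_le_div_of_nonneg_left (by positivity) hden hle
  calc ‖w‖ / (1 + Real.sqrt (c * ‖w‖))
      = 2 * ‖w‖ / (2 * (1 + Real.sqrt (c * ‖w‖))) := by
        rw [mul_div_mul_left _ _ (two_ne_zero)]
    _ ≤ 2 * ‖w‖ / ‖1 + S w c‖ := key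

lemma Z_continuous (w : ℂ) : Continuous (Z w) := by
  have hX : Continuous (X w) := by
    unfold X
    fun_prop
  have hA : Continuous (A w) := by
    unfold A
    exact Real.continuous_sqrt.comp (((continuous_norm.comp hX).add
      (Complex.continuous_re.comp hX)).div_const 2)
  have hB : Continuous (B w) := by
    unfold B
    exact Real.continuous_sqrt.comp (((continuous_norm.comp hX).sub
      (Complex.continuous_re.comp hX)).div_const 2)
  have hS : Continuous (S w) := by
    unfold S
    exact (Complex.continuous_ofReal.comp hA).add
      (((Complex.continuous_ofReal.comp (continuous_const.mul hB))).mul continuous_const)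
  exact continuous_const.div (continuous_const.add hS) (fun c => one_add_S_ne w c)

end PSurj

end PSurjAux

theorem p_surjective (α : ℝ) (hα : 1 / 2 < α) :
    Function.Surjective (p α) := by
  intro w
  by_cases hw : w = 0
  · exact ⟨0, by simp [p, hw]⟩
  set W := ‖w‖ with hWdef
  have hW : 0 < W := norm_pos_iff.mpr hw
  set δ : ℝ := W / (1 + Real.sqrt W) with hδdef
  have hδ : 0 < δ := by positivity
  -- Step 1: a small point where |Z| ≥ a
  have key : ∃ a : ℝ, 0 < a ∧ a ≤ ‖PSurj.Z w (a ^ (2 * α - 2))‖ := by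
    rcases le_or_gt 1 α with h1 | h1
    · -- α ≥ 1
      refine ⟨min δ 1, lt_min hδ one_pos, ?_⟩
      set a := min δ 1 with hadef
      have ha0 : 0 < a := lt_min hδ one_pos
      set c : ℝ := a ^ (2 * α - 2) with hcdef
      have hc0 : 0 ≤ c := Real.rpow_nonneg ha0.le _
      have hc1 : c ≤ 1 := Real.rpow_le_one ha0.le (min_le_right _ _) (by linarith)
      have hcW : c * W ≤ W := by nlinarith
      have hchain : δ ≤ W / (1 + Real.sqrt (c * W)) := by
        apply div_le_div_of_nonneg_left hW.le (by positivity)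
        have := Real.sqrt_le_sqrt hcW
        linarith
      calc a ≤ δ := min_le_left _ _
        _ ≤ W / (1 + Real.sqrt (c * W)) := hchain
        _ ≤ ‖PSurj.Z w c‖ := PSurj.abs_Z_ge w c hc0
    · -- 1/2 < α < 1
      have hα0 : 0 < α := by linarith
      refine ⟨min 1 (δ ^ (α⁻¹ : ℝ)), lt_min one_pos (Real.rpow_pos_of_pos hδ _), ?_⟩
      set a := min 1 (δ ^ (α⁻¹ : ℝ)) with hadef
      have ha0 : 0 < a := lt_min one_pos (Real.rpow_pos_of_pos hδ _)
      have ha1 : a ≤ 1 := min_le_left _ _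
      have haα : a ^ (α : ℝ) ≤ δ := by
        calc a ^ (α : ℝ) ≤ (δ ^ (α⁻¹ : ℝ)) ^ (α : ℝ) :=
              Real.rpow_le_rpow ha0.le (min_le_right _ _) hα0.le
          _ = δ := by
              rw [← Real.rpow_mul hδ.le, inv_mul_cancel₀ (ne_of_gt hα0), Real.rpow_one]
      set c : ℝ := a ^ (2 * α - 2) with hcdef
      have hc0 : 0 ≤ c := Real.rpow_nonneg ha0.le _
      have hc1 : 1 ≤ c :=
        Real.one_le_rpow_of_pos_of_le_one_of_nonpos ha0 ha1 (by linarith)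
      have hsc : Real.sqrt c = a ^ (α - 1 : ℝ) := by
        rw [hcdef, Real.sqrt_eq_rpow, ← Real.rpow_mul ha0.le]
        congr 1
        ring
      have hsc0 : 0 < Real.sqrt c := by rw [hsc]; exact Real.rpow_pos_of_pos ha0 _
      have hsqc1 : 1 ≤ Real.sqrt c := by
        rw [show (1:ℝ) = Real.sqrt 1 by simp]
        exact Real.sqrt_le_sqrt hc1
      have hdenom : 1 + Real.sqrt (c * W) ≤ Real.sqrt c * (1 + Real.sqrt W) := by
        rw [Real.sqrt_mul hc0]
        nlinarith [Real.sqrt_nonneg W]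
      have hchain : δ / Real.sqrt c ≤ W / (1 + Real.sqrt (c * W)) := by
        rw [hδdef, div_div]
        apply div_le_div_of_nonneg_left hW.le (by positivity)
        calc 1 + Real.sqrt (c * W) ≤ Real.sqrt c * (1 + Real.sqrt W) := hdenom
          _ = (1 + Real.sqrt W) * Real.sqrt c := by ring
      have haδ : a ≤ δ / Real.sqrt c := by
        rw [le_div_iff₀ hsc0, hsc]
        calc a * a ^ (α - 1 : ℝ) = a ^ (1 : ℝ) * a ^ (α - 1 : ℝ) := by rw [Real.rpow_one]
          _ = a ^ (1 + (α - 1) : ℝ) := (Real.rpow_add ha0 _ _).symm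
          _ = a ^ (α : ℝ) := by norm_num
          _ ≤ δ := haα
      calc a ≤ δ / Real.sqrt c := haδ
        _ ≤ W / (1 + Real.sqrt (c * W)) := hchain
        _ ≤ ‖PSurj.Z w c‖ := PSurj.abs_Z_ge w c hc0
  obtain ⟨a, ha0, haZ⟩ := key
  set b : ℝ := max a (2 * W) with hbdef
  have hab : a ≤ b := le_max_left _ _
  set h : ℝ → ℝ := fun r => ‖PSurj.Z w (r ^ (2 * α - 2))‖ - r with hhdef
  have hcont : ContinuousOn h (Set.Icc a b) := by
    have hrpow : ContinuousOn (fun r : ℝ => r ^ (2 * α - 2)) (Set.Icc a b) := by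
      intro r hr
      exact (Real.continuousAt_rpow_const r _
        (Or.inl (ne_of_gt (lt_of_lt_of_le ha0 hr.1)))).continuousWithinAt
    exact ((continuous_norm.comp (PSurj.Z_continuous w)).comp_continuousOn hrpow).sub
      continuousOn_id
  have hfa : 0 ≤ h a := by simp only [hhdef]; linarith
  have hfb : h b ≤ 0 := by
    simp only [hhdef]
    have := PSurj.abs_Z_le w (b ^ (2 * α - 2))
    have hb2 : 2 * W ≤ b := le_max_right _ _
    linarith
  obtain ⟨r, hrmem, hr0⟩ := intermediate_value_Icc' hab hcont (Set.mem_Icc.mpr ⟨hfb, hfa⟩)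
  have hrpos : 0 < r := lt_of_lt_of_le ha0 hrmem.1
  have habs : ‖PSurj.Z w (r ^ (2 * α - 2))‖ = r := by
    have : ‖PSurj.Z w (r ^ (2 * α - 2))‖ - r = 0 := hr0
    linarith
  refine ⟨PSurj.Z w (r ^ (2 * α - 2)), ?_⟩
  rw [p, habs]
  exact PSurj.Z_solves w (r ^ (2 * α - 2)) (Real.rpow_nonneg hrpos.le _)
end

section
/- The map p is injective on the closed left half-plane {z : Re(z) ≤ 0}. -/
set_option maxHeartbeats 2000000 in
lemma endgame (α x₁ y₁ x₂ y₂ t₁ t₂ r₁ r₂ : ℝ) (hα : 1 / 2 < α)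
    (hx₁ : x₁ ≤ 0) (hy₁ : 0 ≤ y₁) (hx₂ : x₂ ≤ 0) (hy₂ : 0 ≤ y₂)
    (hr₁ : 0 < r₁) (hr₂ : 0 < r₂) (ht₁ : 0 < t₁) (ht₂ : 0 < t₂)
    (hr1e : r₁ ^ 2 = x₁ ^ 2 + y₁ ^ 2) (hr2e : r₂ ^ 2 = x₂ ^ 2 + y₂ ^ 2)
    (hR1 : t₁ * r₁ ^ 2 = r₁ ^ (2 * α)) (hR2 : t₂ * r₂ ^ 2 = r₂ ^ (2 * α))
    (hE1 : r₂ ^ 2 * y₁ - r₁ ^ 2 * y₂ = (t₁ * r₁ ^ 2 + t₂ * r₂ ^ 2) * (x₂ * y₁ - x₁ * y₂))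
    (hE2 : r₁ ^ 2 * x₂ - r₂ ^ 2 * x₁ = (t₁ * r₁ ^ 2 - t₂ * r₂ ^ 2) * (x₁ * x₂ + y₁ * y₂))
    (hD : 0 ≤ x₂ * y₁ - x₁ * y₂) : x₁ = x₂ ∧ y₁ = y₂ := by
  have h2α : (0:ℝ) < 2 * α := by linarith
  obtain ⟨R₁, hR1'⟩ : ∃ R, R = r₁ ^ (2*α) := ⟨_, rfl⟩
  obtain ⟨R₂, hR2'⟩ : ∃ R, R = r₂ ^ (2*α) := ⟨_, rfl⟩
  rw [← hR1'] at hR1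
  rw [← hR2'] at hR2
  rw [hR1, hR2] at hE1 hE2
  have hRp1 : 0 < R₁ := by rw [← hR1]; positivity
  have hRp2 : 0 < R₂ := by rw [← hR2]; positivity
  have hnx₁ : 0 ≤ -x₁ := by linarith
  have hnx₂ : 0 ≤ -x₂ := by linarith
  -- G1 : r₁²y₂ ≤ r₂²y₁
  have hG1 : r₁ ^ 2 * y₂ ≤ r₂ ^ 2 * y₁ := by
    nlinarith [mul_nonneg (add_pos hRp1 hRp2).le hD]
  -- G2 : r₂ y₁ ≤ r₁ y₂
  have hG2 : r₂ * y₁ ≤ r₁ * y₂ := by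
    have hs : 0 ≤ (-x₁) * y₂ + (-x₂) * y₁ :=
      add_nonneg (mul_nonneg hnx₁ hy₂) (mul_nonneg hnx₂ hy₁)
    have hsq : (r₂ * y₁) ^ 2 ≤ (r₁ * y₂) ^ 2 := by nlinarith [mul_nonneg hD hs]
    by_contra h
    push_neg at h
    nlinarith [mul_nonneg hr₁.le hy₂, mul_nonneg hr₂.le hy₁]
  rcases eq_or_lt_of_le hy₁ with hy10 | hy1p
  · -- y₁ = 0
    have hy1 : y₁ = 0 := hy10.symm
    subst hy1
    have hy2 : y₂ = 0 := by
      have hle : y₂ ≤ 0 := by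
        nlinarith [mul_nonneg (add_pos hRp1 hRp2).le (mul_nonneg hnx₁ hy₂), sq_nonneg r₁]
      linarith
    subst hy2
    have hx1r : x₁ = -r₁ := by
      have h : (x₁ + r₁) * (x₁ - r₁) = 0 := by linear_combination -hr1e
      rcases mul_eq_zero.mp h with h' | h' <;> linarith
    have hx2r : x₂ = -r₂ := by
      have h : (x₂ + r₂) * (x₂ - r₂) = 0 := by linear_combination -hr2e
      rcases mul_eq_zero.mp h with h' | h' <;> linarith
    refine ⟨?_, rfl⟩
    subst hx1r; subst hx2r
    rcases lt_trichotomy r₁ r₂ with h | h | h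
    · exfalso
      have hRlt : R₁ < R₂ := by rw [hR1', hR2']; exact Real.rpow_lt_rpow hr₁.le h h2α
      nlinarith [mul_pos hr₁ hr₂]
    · rw [h]
    · exfalso
      have hRlt : R₂ < R₁ := by rw [hR1', hR2']; exact Real.rpow_lt_rpow hr₂.le h h2α
      nlinarith [mul_pos hr₁ hr₂]
  · -- y₁ > 0
    have hy2p : 0 < y₂ := by
      by_contra h
      push_neg at h
      nlinarith [mul_pos hr₂ hy1p, mul_nonneg hr₁.le (neg_nonneg.mpr h)]
    have hrle : r₁ ≤ r₂ := by
      nlinarith [mul_pos hr₂ hy1p, mul_nonneg hr₁.le (sub_nonneg.mpr hG2)]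
    have hRle : R₁ ≤ R₂ := by
      rw [hR1', hR2']; exact Real.rpow_le_rpow hr₁.le hrle h2α.le
    -- hX : (-x₂) r₁ ≤ (-x₁) r₂
    have hX : (-x₂) * r₁ ≤ (-x₁) * r₂ := by
      have hs : 0 ≤ (-x₁) * y₂ + (-x₂) * y₁ :=
        add_nonneg (mul_nonneg hnx₁ hy₂) (mul_nonneg hnx₂ hy₁)
      have hsq : ((-x₂) * r₁) ^ 2 ≤ ((-x₁) * r₂) ^ 2 := by nlinarith [mul_nonneg hD hs]
      by_contra h
      push_neg at h
      nlinarith [mul_nonneg hnx₂ hr₁.le, mul_nonneg hnx₁ hr₂.le]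
    have hxx : 0 ≤ x₁ * x₂ + y₁ * y₂ :=
      add_nonneg (by nlinarith [mul_nonneg hnx₁ hnx₂]) (mul_nonneg hy₁ hy₂)
    have hge : 0 ≤ r₁ ^ 2 * x₂ - r₂ ^ 2 * x₁ := by
      nlinarith [mul_le_mul_of_nonneg_right hX hr₂.le,
        mul_le_mul_of_nonneg_left hrle (mul_nonneg hnx₂ hr₁.le)]
    have hle : r₁ ^ 2 * x₂ - r₂ ^ 2 * x₁ ≤ 0 := by
      rw [hE2]
      exact mul_nonpos_of_nonpos_of_nonneg (by linarith) hxx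
    have h0 : r₁ ^ 2 * x₂ - r₂ ^ 2 * x₁ = 0 := le_antisymm hle hge
    have hBCeq : (-x₂) * r₁ * (r₂ - r₁) = 0 := by
      have hAB : (-x₂) * r₁ * r₂ ≤ (-x₁) * r₂ * r₂ := mul_le_mul_of_nonneg_right hX hr₂.le
      have hBC : (-x₂) * r₁ * r₁ ≤ (-x₂) * r₁ * r₂ :=
        mul_le_mul_of_nonneg_left hrle (mul_nonneg hnx₂ hr₁.le)
      nlinarith
    rcases eq_or_lt_of_le hx₂ with hx20 | hx2n
    · -- x₂ = 0
      subst hx20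
      have hx1 : x₁ = 0 := by
        have h : r₂ ^ 2 * x₁ = 0 := by linear_combination -h0
        rcases mul_eq_zero.mp h with h' | h'
        · exact absurd h' (ne_of_gt (pow_pos hr₂ 2))
        · exact h'
      subst hx1
      refine ⟨rfl, ?_⟩
      have hE1' : r₂ ^ 2 * y₁ = r₁ ^ 2 * y₂ := by linear_combination hE1
      have hr1y : r₁ = y₁ := by
        have h : (r₁ - y₁) * (r₁ + y₁) = 0 := by linear_combination hr1e
        rcases mul_eq_zero.mp h with h' | h' <;> linarith
      have hr2y : r₂ = y₂ := by
        have h : (r₂ - y₂) * (r₂ + y₂) = 0 := by linear_combination hr2e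
        rcases mul_eq_zero.mp h with h' | h' <;> linarith
      rw [hr1y, hr2y] at hE1'
      have h : y₁ * y₂ * (y₂ - y₁) = 0 := by linear_combination hE1'
      rcases mul_eq_zero.mp h with h' | h'
      · exact absurd h' (ne_of_gt (mul_pos hy1p hy2p))
      · linarith
    · -- x₂ < 0
      have hrr : r₁ = r₂ := by
        rcases mul_eq_zero.mp hBCeq with h' | h'
        · exact absurd h' (ne_of_gt (mul_pos (neg_pos.mpr hx2n) hr₁))
        · linarith
      have hx12 : x₁ = x₂ := by
        rw [hrr] at h0
        have h : r₂ ^ 2 * (x₂ - x₁) = 0 := by linear_combination h0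
        rcases mul_eq_zero.mp h with h' | h'
        · exact absurd h' (ne_of_gt (pow_pos hr₂ 2))
        · linarith
      refine ⟨hx12, ?_⟩
      have hyy : (y₁ - y₂) * (y₁ + y₂) = 0 := by
        rw [hrr, hx12] at hr1e
        linear_combination hr2e - hr1e
      rcases mul_eq_zero.mp hyy with h' | h'
      · linarith
      · exfalso; exact absurd h' (ne_of_gt (by positivity))

lemma p_quadrant (α : ℝ) (hα : 1 / 2 < α) (z₁ z₂ : ℂ) (hz₁ : z₁ ≠ 0) (hz₂ : z₂ ≠ 0)
    (h₁ : z₁.re ≤ 0) (h₂ : z₂.re ≤ 0) (hi₁ : 0 ≤ z₁.im) (hi₂ : 0 ≤ z₂.im)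
    (hp : p α z₁ = p α z₂) : z₁ = z₂ := by
  simp only [p, Complex.ext_iff, Complex.sub_re, Complex.sub_im, Complex.mul_re,
    Complex.mul_im, Complex.ofReal_re, Complex.ofReal_im, pow_two, zero_mul, mul_zero,
    sub_zero, zero_add, zero_sub] at hp
  obtain ⟨P, Q⟩ := hp
  set x₁ := z₁.re with hx1def
  set y₁ := z₁.im with hy1def
  set x₂ := z₂.re with hx2def
  set y₂ := z₂.im with hy2def
  set t₁ : ℝ := ‖z₁‖ ^ (2 * α - 2) with ht1def
  set t₂ : ℝ := ‖z₂‖ ^ (2 * α - 2) with ht2def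
  set r₁ : ℝ := ‖z₁‖ with hr1def
  set r₂ : ℝ := ‖z₂‖ with hr2def
  have hr₁ : 0 < r₁ := norm_pos_iff.mpr hz₁
  have hr₂ : 0 < r₂ := norm_pos_iff.mpr hz₂
  have ht₁ : 0 < t₁ := Real.rpow_pos_of_pos hr₁ _
  have ht₂ : 0 < t₂ := Real.rpow_pos_of_pos hr₂ _
  have hr1e : r₁ ^ 2 = x₁ ^ 2 + y₁ ^ 2 := by
    rw [hr1def, Complex.sq_norm, Complex.normSq_apply]; ring
  have hr2e : r₂ ^ 2 = x₂ ^ 2 + y₂ ^ 2 := by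
    rw [hr2def, Complex.sq_norm, Complex.normSq_apply]; ring
  have hR1 : t₁ * r₁ ^ 2 = r₁ ^ (2 * α) := by
    rw [ht1def, ← Real.rpow_natCast r₁ 2, ← Real.rpow_add hr₁]
    norm_num
  have hR2 : t₂ * r₂ ^ 2 = r₂ ^ (2 * α) := by
    rw [ht2def, ← Real.rpow_natCast r₂ 2, ← Real.rpow_add hr₂]
    norm_num
  have hE1 : r₂ ^ 2 * y₁ - r₁ ^ 2 * y₂ = (t₁ * r₁ ^ 2 + t₂ * r₂ ^ 2) * (x₂ * y₁ - x₁ * y₂) := by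
    rw [hr1e, hr2e]
    linear_combination (x₁ * x₂ - y₁ * y₂) * Q - (x₁ * y₂ + x₂ * y₁) * P
  have hE2 : r₁ ^ 2 * x₂ - r₂ ^ 2 * x₁ = (t₁ * r₁ ^ 2 - t₂ * r₂ ^ 2) * (x₁ * x₂ + y₁ * y₂) := by
    rw [hr1e, hr2e]
    linear_combination (x₁ * x₂ - y₁ * y₂) * P + (x₁ * y₂ + x₂ * y₁) * Q
  have hE1' : r₁ ^ 2 * y₂ - r₂ ^ 2 * y₁ = (t₂ * r₂ ^ 2 + t₁ * r₁ ^ 2) * (x₁ * y₂ - x₂ * y₁) := by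
    linear_combination -hE1
  have hE2' : r₂ ^ 2 * x₁ - r₁ ^ 2 * x₂ = (t₂ * r₂ ^ 2 - t₁ * r₁ ^ 2) * (x₂ * x₁ + y₂ * y₁) := by
    linear_combination -hE2
  rcases le_total 0 (x₂ * y₁ - x₁ * y₂) with hD | hD
  · obtain ⟨hx, hy⟩ := endgame α x₁ y₁ x₂ y₂ t₁ t₂ r₁ r₂ hα h₁ hi₁ h₂ hi₂ hr₁ hr₂ ht₁ ht₂
      hr1e hr2e hR1 hR2 hE1 hE2 hD
    exact Complex.ext hx hy
  · obtain ⟨hx, hy⟩ := endgame α x₂ y₂ x₁ y₁ t₂ t₁ r₂ r₁ hα h₂ hi₂ h₁ hi₁ hr₂ hr₁ ht₂ ht₁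
      hr2e hr1e hR2 hR1 hE1' hE2' (by linarith)
    exact (Complex.ext hx hy).symm

lemma p_zero_iff (α : ℝ) (z : ℂ) (hre : z.re ≤ 0) (hp : p α z = 0) : z = 0 := by
  by_contra hz
  have hr : 0 < ‖z‖ := norm_pos_iff.mpr hz
  have ht : 0 < ‖z‖ ^ (2 * α - 2) := Real.rpow_pos_of_pos hr _
  simp only [p, Complex.ext_iff, Complex.sub_re, Complex.sub_im, Complex.mul_re,
    Complex.mul_im, Complex.ofReal_re, Complex.ofReal_im, pow_two, zero_mul, mul_zero,
    sub_zero, zero_add, zero_sub, Complex.zero_re, Complex.zero_im] at hp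
  obtain ⟨P, Q⟩ := hp
  set t : ℝ := ‖z‖ ^ (2 * α - 2)
  set x := z.re
  set y := z.im
  -- Q : y - t * (x*y + y*x) = 0
  have hy : y = 0 := by
    rcases mul_eq_zero.mp (show y * (1 - 2 * t * x) = 0 by linear_combination Q) with h | h
    · exact h
    · exfalso; nlinarith [mul_nonneg ht.le (neg_nonneg.mpr hre)]
  have hx : x = 0 := by
    rcases mul_eq_zero.mp (show x * (1 - t * x) = 0 by rw [hy] at P; linear_combination P) with h | h
    · exact h
    · exfalso; nlinarith [mul_nonneg ht.le (neg_nonneg.mpr hre)]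
  exact hz (Complex.ext hx hy)

lemma p_conj (α : ℝ) (z : ℂ) : p α (starRingEnd ℂ z) = starRingEnd ℂ (p α z) := by
  simp [p, map_sub, map_mul, Complex.norm_conj]

lemma p_zero (α : ℝ) : p α 0 = 0 := by simp [p]

theorem p_injective_on_left_half_plane (α : ℝ) (hα : 1 / 2 < α) :
    Set.InjOn (p α) {z : ℂ | z.re ≤ 0} := by
  intro z₁ h₁ z₂ h₂ hp
  simp only [Set.mem_setOf_eq] at h₁ h₂
  rcases eq_or_ne z₁ 0 with rfl | hz₁
  · exact (p_zero_iff α z₂ h₂ (by rw [← hp, p_zero])).symm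
  rcases eq_or_ne z₂ 0 with rfl | hz₂
  · exact p_zero_iff α z₁ h₁ (by rw [hp, p_zero])
  -- signs of imaginary parts agree
  have hr₁ : 0 < ‖z₁‖ := norm_pos_iff.mpr hz₁
  have hr₂ : 0 < ‖z₂‖ := norm_pos_iff.mpr hz₂
  have ht₁ : 0 < ‖z₁‖ ^ (2 * α - 2) := Real.rpow_pos_of_pos hr₁ _
  have ht₂ : 0 < ‖z₂‖ ^ (2 * α - 2) := Real.rpow_pos_of_pos hr₂ _
  have Q := congrArg Complex.im hp
  simp only [p, Complex.sub_im, Complex.mul_im, Complex.ofReal_re, Complex.ofReal_im,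
    pow_two, Complex.mul_re, zero_mul, mul_zero, sub_zero, zero_add, zero_sub] at Q
  set t₁ : ℝ := ‖z₁‖ ^ (2 * α - 2)
  set t₂ : ℝ := ‖z₂‖ ^ (2 * α - 2)
  have hf₁ : (1:ℝ) ≤ 1 - 2 * t₁ * z₁.re := by nlinarith [mul_nonneg ht₁.le (neg_nonneg.mpr h₁)]
  have hf₂ : (1:ℝ) ≤ 1 - 2 * t₂ * z₂.re := by nlinarith [mul_nonneg ht₂.le (neg_nonneg.mpr h₂)]
  have hQ : z₁.im * (1 - 2 * t₁ * z₁.re) = z₂.im * (1 - 2 * t₂ * z₂.re) := by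
    linear_combination Q
  rcases le_total 0 z₁.im with hi₁ | hi₁
  · have hi₂ : 0 ≤ z₂.im := by nlinarith
    exact p_quadrant α hα z₁ z₂ hz₁ hz₂ h₁ h₂ hi₁ hi₂ hp
  · have hi₂ : z₂.im ≤ 0 := by nlinarith
    have hc : starRingEnd ℂ z₁ = starRingEnd ℂ z₂ := by
      apply p_quadrant α hα _ _ (by simpa using hz₁) (by simpa using hz₂)
      · simpa using h₁
      · simpa using h₂
      · simpa using hi₁
      · simpa using hi₂
      · rw [p_conj, p_conj, hp]
    exact (starRingEnd ℂ).injective hc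
end
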